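/- arXiv:1809.02865 — 7 statements merged into one kernel-verified Lean document; each statement's English description precedes it below -/
import Mathlib

section
/- Let a,b be positive real numbers with a ≥ b, and define the metric coefficient function h(r) = (1/4)·a²sin²(2r)/(a²cos²r + b²sin²r) on (0, π/2). Then the Gaussian curvature of the rotationally symmetric metric g = dr² + h(r)dθ², given by K(r) = -h''_{sqrt}(r)/h_{sqrt}(r) where h_{sqrt} = √h, equals (3a⁴ + 26a²b² + 3b⁴ + 4(a⁴-b⁴)cos 2r + (a²-b²)²cos 4r) / (2(a²+b² + (a²-b²)cos 2r)²). -/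
open Real

/-!
Write `f = u / √D` with `u = (a/2) sin 2r` and `D = a² cos² r + b² sin² r`. Two applications of
the quotient rule give `f''/f = u''/u - u'D'/(uD) - D''/(2D) + 3D'²/(4D²)`. Here `u'' = -4u`,
`D' = (b² - a²) sin 2r` and `D = (a² + b² + (a² - b²) cos 2r)/2`, so after clearing denominators
the claim is a polynomial identity in `cos 2r` and `sin 2r` modulo `sin² + cos² = 1`.
-/

lemma hasDerivAt_div_sqrt {u D : ℝ → ℝ} {u' D' x : ℝ} (hu : HasDerivAt u u' x)
    (hD : HasDerivAt D D' x) (hpos : 0 < D x) :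
    HasDerivAt (fun y => u y / √(D y)) ((u' - u x * D' / (2 * D x)) / √(D x)) x := by
  have hs : 0 < √(D x) := sqrt_pos.mpr hpos
  refine (hu.div (hD.sqrt hpos.ne') hs.ne').congr_deriv ?_
  have h2 : √(D x) ^ 2 = D x := sq_sqrt hpos.le
  field_simp
  rw [h2]
  ring

lemma hasDerivAt_deriv_div_sqrt {u u' u'' D D' D'' : ℝ → ℝ}
    (hu : ∀ x, HasDerivAt u (u' x) x) (hu' : ∀ x, HasDerivAt u' (u'' x) x)
    (hD : ∀ x, HasDerivAt D (D' x) x) (hD' : ∀ x, HasDerivAt D' (D'' x) x)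
    (hpos : ∀ x, 0 < D x) (x : ℝ) :
    HasDerivAt (deriv fun y => u y / √(D y))
      ((u'' x - u' x * D' x / D x - u x * D'' x / (2 * D x)
        + 3 * u x * D' x ^ 2 / (4 * D x ^ 2)) / √(D x)) x := by
  have hderiv : deriv (fun y => u y / √(D y)) =
      fun y => (u' y - u y * D' y / (2 * D y)) / √(D y) :=
    funext fun y => (hasDerivAt_div_sqrt (hu y) (hD y) (hpos y)).deriv
  have hD0 := (hpos x).ne'
  have hv : HasDerivAt (fun y => u' y - u y * D' y / (2 * D y))
      (u'' x - ((u' x * D' x + u x * D'' x) * (2 * D x) - u x * D' x * (2 * D' x))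
        / (2 * D x) ^ 2) x :=
    (hu' x).sub (((hu x).mul (hD' x)).div ((hD x).const_mul 2) (by positivity))
  rw [hderiv]
  refine (hasDerivAt_div_sqrt hv (hD x) (hpos x)).congr_deriv ?_
  field_simp
  ring

lemma hasDerivAt_const_mul_sin_two_mul (k x : ℝ) :
    HasDerivAt (fun y => k * sin (2 * y)) (2 * k * cos (2 * x)) x := by
  refine (((hasDerivAt_id x).const_mul 2).sin.const_mul k).congr_deriv ?_
  simp only [id, mul_one]
  ring

lemma hasDerivAt_const_mul_cos_two_mul (k x : ℝ) :
    HasDerivAt (fun y => k * cos (2 * y)) (-(2 * k * sin (2 * x))) x := by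
  refine (((hasDerivAt_id x).const_mul 2).cos.const_mul k).congr_deriv ?_
  simp only [id, mul_one]
  ring

lemma sq_mul_cos_sq_add_sq_mul_sin_sq_eq (a b x : ℝ) :
    a ^ 2 * cos x ^ 2 + b ^ 2 * sin x ^ 2 = (a ^ 2 + b ^ 2 + (a ^ 2 - b ^ 2) * cos (2 * x)) / 2 := by
  rw [cos_two_mul, sin_sq]
  ring

lemma sq_mul_cos_sq_add_sq_mul_sin_sq_pos {a b : ℝ} (ha : a ≠ 0) (hb : b ≠ 0) (x : ℝ) :
    0 < a ^ 2 * cos x ^ 2 + b ^ 2 * sin x ^ 2 := by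
  rcases eq_or_ne (cos x) 0 with hc | hc
  · have hs : sin x ^ 2 = 1 := by nlinarith [sin_sq_add_cos_sq x]
    simp only [hc, hs]
    positivity
  · have := sq_nonneg (b * sin x)
    have : 0 < (a * cos x) ^ 2 := by positivity
    nlinarith

lemma hasDerivAt_sq_mul_cos_sq_add_sq_mul_sin_sq (a b x : ℝ) :
    HasDerivAt (fun y => a ^ 2 * cos y ^ 2 + b ^ 2 * sin y ^ 2)
      ((b ^ 2 - a ^ 2) * sin (2 * x)) x := by
  refine ((((hasDerivAt_cos x).pow 2).const_mul _).add
    (((hasDerivAt_sin x).pow 2).const_mul _)).congr_deriv ?_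
  rw [sin_two_mul]
  ring

/-- The Gaussian curvature `-f''/f` of the rotationally symmetric metric
`g = dr² + f(r)²dθ²` on the orbit space of the weighted circle action with weights
`a ≥ b > 0`, where `f(r) = (1/2)·a·sin(2r)/√(a²cos²r + b²sin²r)`, is given by the
explicit trigonometric formula. -/
theorem stmt0 (a b : ℝ) (hb : 0 < b) (hab : b ≤ a)
    (f : ℝ → ℝ)
    (hf : ∀ r, f r = (1/2) * a * Real.sin (2*r) /
      Real.sqrt (a^2 * Real.cos r ^ 2 + b^2 * Real.sin r ^ 2)) :
    ∀ r ∈ Set.Ioo 0 (Real.pi/2),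
      -(deriv (deriv f) r) / f r =
        (3*a^4 + 26*a^2*b^2 + 3*b^4 + 4*(a^4 - b^4) * Real.cos (2*r)
            + (a^2 - b^2)^2 * Real.cos (4*r)) /
          (2 * (a^2 + b^2 + (a^2 - b^2) * Real.cos (2*r))^2) := by
  rintro r ⟨hr0, hr1⟩
  have ha : a ≠ 0 := (hb.trans_le hab).ne'
  have hpos := sq_mul_cos_sq_add_sq_mul_sin_sq_pos ha hb.ne'
  have hf'' := hasDerivAt_deriv_div_sqrt (hasDerivAt_const_mul_sin_two_mul (1 / 2 * a))
    (hasDerivAt_const_mul_cos_two_mul _) (hasDerivAt_sq_mul_cos_sq_add_sq_mul_sin_sq a b)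
    (hasDerivAt_const_mul_sin_two_mul _) hpos r
  rw [show f = _ from funext hf, hf''.deriv, ← neg_div,
    div_div_div_cancel_right₀ (sqrt_pos.mpr (hpos r)).ne']
  have hsin : sin (2 * r) ≠ 0 := (sin_pos_of_pos_of_lt_pi (by linarith) (by linarith)).ne'
  -- factor order as `field_simp` normalizes the denominator
  have hden : a ^ 2 + b ^ 2 + cos (2 * r) * (a ^ 2 - b ^ 2) ≠ 0 := by
    linarith [hpos r, sq_mul_cos_sq_add_sq_mul_sin_sq_eq a b r]
  have hcos4 : cos (4 * r) = 2 * cos (2 * r) ^ 2 - 1 := by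
    rw [show 4 * r = 2 * (2 * r) by ring, cos_two_mul]
  rw [sq_mul_cos_sq_add_sq_mul_sin_sq_eq, hcos4]
  field_simp
  linear_combination -24 * (a ^ 2 - b ^ 2) ^ 2 * sin_sq_add_cos_sq (2 * r)
end

section
/- Define f(r) = (1/2)·sin(2r)/√(cos²r + 4sin²r) on (0, π/2). Then the image of the function r ↦ -f''(r)/f(r) on (0, π/2) is the open interval (7/4, 13), and the image of the function r ↦ (1 - f'(r)²)/f(r)² on (0, π/2) is the interval [9, ∞). -/
open Real Set Filter Topology

/-! With `s = sin² r` we have `cos² r + 4 sin² r = 1 + 3s`, so `f = sin r cos r / √(1 + 3s)`, and a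
direct computation gives `-f''/f = 1 + 12/(1 + 3s)²` and
`(1 - f'²)/f² = 9 + 4(3s - 1)²(2s + 1)/((1 + 3s)²(1 - s))`. As `r` runs over `(0, π/2)`, `s` runs
over `(0, 1)`; there the first expression decreases from `13` to `7/4`, and the second attains its
minimum `9` at `s = 1/3` and tends to `∞` as `s → 1`. -/

namespace SU2Warp

noncomputable def den (r : ℝ) : ℝ := √(1 + 3 * sin r ^ 2)

/-- `-f''/f` and `(1 - f'²)/f²` as functions of `s = sin² r`. -/
noncomputable def radialCurv (s : ℝ) : ℝ := 1 + 12 / (1 + 3 * s) ^ 2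

noncomputable def tangentialCurv (s : ℝ) : ℝ :=
  9 + 4 * (3 * s - 1) ^ 2 * (2 * s + 1) / ((1 + 3 * s) ^ 2 * (1 - s))

lemma den_pos (r : ℝ) : 0 < den r := sqrt_pos.2 (by positivity)

lemma den_sq (r : ℝ) : den r ^ 2 = 1 + 3 * sin r ^ 2 := sq_sqrt (by positivity)

lemma cos_sq_eq (r : ℝ) : cos r ^ 2 = 1 - sin r ^ 2 := by linarith [sin_sq_add_cos_sq r]

lemma warp_eq (r : ℝ) :
    1 / 2 * sin (2 * r) / √(cos r ^ 2 + 4 * sin r ^ 2) = sin r * cos r / den r := by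
  rw [sin_two_mul, den, cos_sq_eq, show 1 - sin r ^ 2 + 4 * sin r ^ 2 = 1 + 3 * sin r ^ 2 by ring]
  ring

lemma hasDerivAt_den (r : ℝ) : HasDerivAt den (3 * sin r * cos r / den r) r := by
  have h : HasDerivAt (fun r => 1 + 3 * sin r ^ 2) (6 * sin r * cos r) r :=
    ((((hasDerivAt_sin r).pow 2).const_mul 3).const_add 1).congr_deriv (by push_cast; ring)
  refine (h.sqrt (by positivity)).congr_deriv ?_
  rw [← den]
  field_simp
  ring

lemma hasDerivAt_warp (r : ℝ) :
    HasDerivAt (fun r => sin r * cos r / den r)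
      ((1 + sin r ^ 2) * (1 - 3 * sin r ^ 2) / den r ^ 3) r := by
  refine (((hasDerivAt_sin r).mul (hasDerivAt_cos r)).div (hasDerivAt_den r)
    (den_pos r).ne').congr_deriv ?_
  have hden := (den_pos r).ne'
  simp only [Pi.mul_apply]
  field_simp
  linear_combination (cos r ^ 2 - sin r ^ 2) * den_sq r + cos_sq_eq r

lemma hasDerivAt_deriv_warp (r : ℝ) :
    HasDerivAt (fun r => (1 + sin r ^ 2) * (1 - 3 * sin r ^ 2) / den r ^ 3)
      (-(sin r * cos r) * (13 + 6 * sin r ^ 2 + 9 * sin r ^ 4) / den r ^ 5) r := by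
  have hA : HasDerivAt (fun r => 1 + sin r ^ 2) (2 * sin r * cos r) r :=
    (((hasDerivAt_sin r).pow 2).const_add 1).congr_deriv (by push_cast; ring)
  have hB : HasDerivAt (fun r => 1 - 3 * sin r ^ 2) (-(6 * sin r * cos r)) r :=
    ((((hasDerivAt_sin r).pow 2).const_mul 3).const_sub 1).congr_deriv (by push_cast; ring)
  refine ((hA.mul hB).div ((hasDerivAt_den r).pow 3) (pow_ne_zero _ (den_pos r).ne')).congr_deriv ?_
  have hden := (den_pos r).ne'
  simp only [Pi.mul_apply, Pi.pow_apply]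
  field_simp
  linear_combination (-4 * sin r * cos r * (1 + 3 * sin r ^ 2) * den r ^ 2) * den_sq r

lemma neg_deriv_deriv_div_warp {r : ℝ} (hs : sin r ≠ 0) (hc : cos r ≠ 0) :
    -(-(sin r * cos r) * (13 + 6 * sin r ^ 2 + 9 * sin r ^ 4) / den r ^ 5) /
      (sin r * cos r / den r) = radialCurv (sin r ^ 2) := by
  have hden := (den_pos r).ne'
  rw [radialCurv]
  field_simp
  rw [show den r ^ 4 = (den r ^ 2) ^ 2 by ring, den_sq]
  ring

lemma one_sub_sq_deriv_div_sq_warp {r : ℝ} (hs : sin r ≠ 0) (hc : cos r ≠ 0) :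
    (1 - ((1 + sin r ^ 2) * (1 - 3 * sin r ^ 2) / den r ^ 3) ^ 2) / (sin r * cos r / den r) ^ 2
      = tangentialCurv (sin r ^ 2) := by
  have hden := (den_pos r).ne'
  have h1s : 1 - sin r ^ 2 ≠ 0 := by rw [← cos_sq_eq]; positivity
  rw [tangentialCurv]
  field_simp
  rw [show den r ^ 6 = (den r ^ 2) ^ 3 by ring, show den r ^ 4 = (den r ^ 2) ^ 2 by ring, den_sq,
    cos_sq_eq]
  ring

lemma sin_pos_and_cos_pos {r : ℝ} (hr : r ∈ Ioo 0 (π / 2)) : 0 < sin r ∧ 0 < cos r :=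
  ⟨sin_pos_of_pos_of_lt_pi hr.1 (by linarith [pi_pos, hr.2]),
    cos_pos_of_mem_Ioo ⟨by linarith [pi_pos, hr.1], hr.2⟩⟩

lemma image_sin_sq_Ioo : (fun r => sin r ^ 2) '' Ioo 0 (π / 2) = Ioo 0 1 := by
  refine Subset.antisymm ?_ ?_
  · rintro _ ⟨r, hr, rfl⟩
    obtain ⟨hs, hc⟩ := sin_pos_and_cos_pos hr
    exact ⟨by positivity, by nlinarith [sin_sq_add_cos_sq r]⟩
  · simpa using intermediate_value_Ioo pi_div_two_pos.le (continuous_sin.pow 2).continuousOn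

lemma image_radialCurv_Ioo : radialCurv '' Ioo 0 1 = Ioo (7 / 4) 13 := by
  refine Subset.antisymm ?_ ?_
  · rintro _ ⟨s, ⟨hs0, hs1⟩, rfl⟩
    have hlow : 1 < (1 + 3 * s) ^ 2 := by nlinarith
    have hhigh : (1 + 3 * s) ^ 2 < 16 := by nlinarith
    have h12 := div_lt_div_of_pos_left (by norm_num : (0 : ℝ) < 12) one_pos hlow
    have h34 := div_lt_div_of_pos_left (by norm_num : (0 : ℝ) < 12) (one_pos.trans hlow) hhigh
    constructor <;> rw [radialCurv] <;> linarith
  · have hcont : ContinuousOn radialCurv (Icc 0 1) :=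
      continuousOn_const.add <| continuousOn_const.div (by fun_prop) fun s hs => by
        have := hs.1
        positivity
    have h := intermediate_value_Ioo' zero_le_one hcont
    norm_num [radialCurv] at h
    exact h

lemma nine_le_tangentialCurv {s : ℝ} (hs0 : 0 ≤ s) (hs1 : s < 1) : 9 ≤ tangentialCurv s := by
  have : 0 < 1 - s := sub_pos.2 hs1
  rw [tangentialCurv]
  linarith [show 0 ≤ 4 * (3 * s - 1) ^ 2 * (2 * s + 1) / ((1 + 3 * s) ^ 2 * (1 - s)) by positivity]

lemma tendsto_tangentialCurv : Tendsto tangentialCurv (𝓝[<] 1) atTop := by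
  have hinv : Tendsto (fun s : ℝ => (1 - s)⁻¹) (𝓝[<] 1) atTop := by
    refine tendsto_inv_nhdsGT_zero.comp <| tendsto_nhdsWithin_of_tendsto_nhds_of_eventually_within
      _ ?_ ?_
    · exact ((continuous_const.sub continuous_id).tendsto' 1 0 (sub_self 1)).mono_left
        nhdsWithin_le_nhds
    · filter_upwards [self_mem_nhdsWithin] with s (hs : s < 1) using sub_pos.2 hs
  have hcoef : Tendsto (fun s : ℝ => 4 * (3 * s - 1) ^ 2 * (2 * s + 1) / (1 + 3 * s) ^ 2)
      (𝓝[<] 1) (𝓝 3) := by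
    refine ((ContinuousAt.tendsto ?_).mono_left nhdsWithin_le_nhds).trans_eq (by norm_num)
    exact ContinuousAt.div (by fun_prop) (by fun_prop) (by norm_num)
  refine (tendsto_atTop_add_const_left _ 9 (hcoef.pos_mul_atTop (by norm_num) hinv)).congr' ?_
  filter_upwards with s
  rw [tangentialCurv, div_mul_eq_div_div, div_eq_mul_inv _ (1 - s)]

lemma image_tangentialCurv_Ioo : tangentialCurv '' Ioo 0 1 = Ici 9 := by
  refine Subset.antisymm ?_ ?_
  · rintro _ ⟨s, ⟨hs0, hs1⟩, rfl⟩
    exact nine_le_tangentialCurv hs0.le hs1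
  · have h9 : tangentialCurv (1 / 3) = 9 := by norm_num [tangentialCurv]
    have hcont : ContinuousOn tangentialCurv (Ico (1 / 3) 1) :=
      continuousOn_const.add <| ContinuousOn.div (by fun_prop) (by fun_prop) fun s hs => by
        have := sub_pos.2 hs.2
        have := hs.1
        positivity
    rw [← h9]
    refine (isPreconnected_Ico.intermediate_value_Ici ⟨le_rfl, by norm_num⟩
      (le_principal_iff.2 (Ico_mem_nhdsLT (by norm_num))) hcont tendsto_tangentialCurv).trans ?_
    exact image_mono fun s hs => ⟨by linarith [hs.1], hs.2⟩

end SU2Warp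

open SU2Warp

/-- For the warping function `f(r) = (1/2)·sin(2r)/√(cos²r + 4sin²r)` of the orbit
space of the `SU(2)`-representation `ℂ² ⊕ ℝ³`, the image of `-f''/f` on `(0, π/2)`
is the open interval `(7/4, 13)`, and the image of `(1 - f'²)/f²` is `[9, ∞)`. -/
theorem stmt4 (f : ℝ → ℝ)
    (hf : ∀ r, f r = (1/2) * Real.sin (2*r) /
      Real.sqrt (Real.cos r ^ 2 + 4 * Real.sin r ^ 2)) :
    (fun r => -(deriv (deriv f) r) / f r) '' Set.Ioo 0 (Real.pi/2)
      = Set.Ioo (7/4 : ℝ) 13 ∧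
    (fun r => (1 - (deriv f r)^2) / (f r)^2) '' Set.Ioo 0 (Real.pi/2)
      = Set.Ici (9 : ℝ) := by
  obtain rfl : f = fun r => sin r * cos r / den r := funext fun r => (hf r).trans (warp_eq r)
  have hdf : deriv (fun r => sin r * cos r / den r) =
      fun r => (1 + sin r ^ 2) * (1 - 3 * sin r ^ 2) / den r ^ 3 :=
    funext fun r => (hasDerivAt_warp r).deriv
  have hddf : ∀ r, deriv (fun r => (1 + sin r ^ 2) * (1 - 3 * sin r ^ 2) / den r ^ 3) r =
      -(sin r * cos r) * (13 + 6 * sin r ^ 2 + 9 * sin r ^ 4) / den r ^ 5 :=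
    fun r => (hasDerivAt_deriv_warp r).deriv
  simp only [hdf, hddf]
  rw [← image_radialCurv_Ioo, ← image_tangentialCurv_Ioo, ← image_sin_sq_Ioo, ← image_comp,
    ← image_comp]
  constructor <;> refine image_congr fun r hr => ?_ <;>
    obtain ⟨hs, hc⟩ := sin_pos_and_cos_pos hr
  · exact neg_deriv_deriv_div_warp hs.ne' hc.ne'
  · exact one_sub_sq_deriv_div_sq_warp hs.ne' hc.ne'
end

section
/- Define f(r) = (1/2)·sin(2r)/√(cos²r + 4sin²r) on (0, π/2). Then for all r ∈ (0, π/2): -f''(r)/f(r) > 7/4 and (1 - f'(r)²)/f(r)² ≥ 9. In particular both quantities exceed 7/4, and the infimum of -f''/f over (0, π/2) equals 7/4. -/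
/-!
Write `f r = sin r cos r / √(1 + 3 sin² r)` and `t = sin² r`. Then
`f' = (1 + t)(1 - 3t) / (1 + 3t)^(3/2)` and `f'' = -sin r cos r (13 + 6t + 9t²) / (1 + 3t)^(5/2)`,
so `-f''/f = (13 + 6t + 9t²)/(1 + 3t)² = 7/4 + 9(1 - t)(5 + 3t)/(4(1 + 3t)²)`, which exceeds `7/4`
for `t < 1` and tends to `7/4` as `r → π/2`. For the other quantity,
`1 - f'² - 9f² = 4t(3t - 1)²(2t + 1)/(1 + 3t)³ ≥ 0`.
-/

open Real Set

noncomputable def warp (r : ℝ) : ℝ := sin r * cos r / √(1 + 3 * sin r ^ 2)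

lemma warp_eq (r : ℝ) : (1/2) * sin (2*r) / √(cos r ^ 2 + 4 * sin r ^ 2) = warp r := by
  rw [warp, sin_two_mul, cos_sq']
  ring_nf

lemma sin_pos_and_cos_pos {r : ℝ} (hr : r ∈ Ioo 0 (π / 2)) : 0 < sin r ∧ 0 < cos r :=
  ⟨sin_pos_of_mem_Ioo ⟨hr.1, by linarith [hr.2, pi_pos]⟩,
    cos_pos_of_mem_Ioo ⟨by linarith [hr.1, pi_pos], hr.2⟩⟩

lemma warp_pos {r : ℝ} (hr : r ∈ Ioo 0 (π / 2)) : 0 < warp r := by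
  obtain ⟨hs, hc⟩ := sin_pos_and_cos_pos hr
  unfold warp
  positivity

lemma sq_sqrt_one_add_three_mul_sin_sq (r : ℝ) :
    √(1 + 3 * sin r ^ 2) ^ 2 = 1 + 3 * sin r ^ 2 :=
  sq_sqrt (by positivity)

lemma hasDerivAt_sqrt_one_add_three_mul_sin_sq (r : ℝ) :
    HasDerivAt (fun r => √(1 + 3 * sin r ^ 2))
      (3 * sin r * cos r / √(1 + 3 * sin r ^ 2)) r := by
  have h := ((((hasDerivAt_sin r).fun_pow 2).const_mul 3).const_add 1).sqrt (by positivity)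
  convert h using 1
  field_simp
  ring

lemma hasDerivAt_warp (r : ℝ) :
    HasDerivAt warp ((1 + sin r ^ 2) * (1 - 3 * sin r ^ 2) / √(1 + 3 * sin r ^ 2) ^ 3) r := by
  have hq : 0 < √(1 + 3 * sin r ^ 2) := sqrt_pos.mpr (by positivity)
  refine (((hasDerivAt_sin r).fun_mul (hasDerivAt_cos r)).fun_div
    (hasDerivAt_sqrt_one_add_three_mul_sin_sq r) hq.ne').congr_deriv ?_
  have hq2 := sq_sqrt_one_add_three_mul_sin_sq r
  generalize √(1 + 3 * sin r ^ 2) = q at hq hq2 ⊢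
  field_simp
  linear_combination (cos r ^ 2 - sin r ^ 2) * hq2 + sin_sq_add_cos_sq r

lemma hasDerivAt_deriv_warp (r : ℝ) :
    HasDerivAt (fun r => (1 + sin r ^ 2) * (1 - 3 * sin r ^ 2) / √(1 + 3 * sin r ^ 2) ^ 3)
      (-(sin r * cos r * (13 + 6 * sin r ^ 2 + 9 * sin r ^ 4)) / √(1 + 3 * sin r ^ 2) ^ 5) r := by
  have hq : 0 < √(1 + 3 * sin r ^ 2) := sqrt_pos.mpr (by positivity)
  have hs2 := (hasDerivAt_sin r).fun_pow 2
  refine (((hs2.const_add 1).fun_mul ((hs2.const_mul 3).const_sub 1)).fun_div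
    ((hasDerivAt_sqrt_one_add_three_mul_sin_sq r).fun_pow 3) (by positivity)).congr_deriv ?_
  have hq2 := sq_sqrt_one_add_three_mul_sin_sq r
  generalize √(1 + 3 * sin r ^ 2) = q at hq hq2 ⊢
  field_simp
  linear_combination -4 * cos r * sin r * (1 + 3 * sin r ^ 2) * q ^ 2 * hq2

lemma deriv_warp :
    deriv warp = fun r => (1 + sin r ^ 2) * (1 - 3 * sin r ^ 2) / √(1 + 3 * sin r ^ 2) ^ 3 :=
  funext fun r => (hasDerivAt_warp r).deriv

lemma deriv_deriv_warp (r : ℝ) :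
    deriv (deriv warp) r =
      -(sin r * cos r * (13 + 6 * sin r ^ 2 + 9 * sin r ^ 4)) / √(1 + 3 * sin r ^ 2) ^ 5 := by
  rw [deriv_warp]
  exact (hasDerivAt_deriv_warp r).deriv

lemma nine_mul_warp_sq_le (r : ℝ) : 9 * warp r ^ 2 ≤ 1 - deriv warp r ^ 2 := by
  have key : 1 - deriv warp r ^ 2 - 9 * warp r ^ 2 =
      4 * sin r ^ 2 * (3 * sin r ^ 2 - 1) ^ 2 * (2 * sin r ^ 2 + 1) / (1 + 3 * sin r ^ 2) ^ 3 := by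
    rw [deriv_warp, warp, div_pow, div_pow, ← pow_mul, pow_mul', mul_pow (sin r), cos_sq',
      sq_sqrt_one_add_three_mul_sin_sq]
    field_simp
    ring
  have : 0 ≤ 1 - deriv warp r ^ 2 - 9 * warp r ^ 2 := by
    rw [key]
    positivity
  linarith

noncomputable def radialCurvature (t : ℝ) : ℝ := (13 + 6 * t + 9 * t ^ 2) / (1 + 3 * t) ^ 2

lemma neg_deriv_deriv_warp_div_warp {r : ℝ} (hs : sin r ≠ 0) (hc : cos r ≠ 0) :
    -deriv (deriv warp) r / warp r = radialCurvature (sin r ^ 2) := by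
  have hq : 0 < √(1 + 3 * sin r ^ 2) := sqrt_pos.mpr (by positivity)
  have hq2 := sq_sqrt_one_add_three_mul_sin_sq r
  rw [deriv_deriv_warp, warp, radialCurvature]
  generalize √(1 + 3 * sin r ^ 2) = q at hq hq2 ⊢
  rw [← hq2]
  field_simp

lemma seven_div_four_lt_radialCurvature {t : ℝ} (h0 : 0 ≤ t) (h1 : t < 1) :
    7 / 4 < radialCurvature t := by
  rw [radialCurvature, lt_div_iff₀ (by positivity)]
  nlinarith [mul_pos (sub_pos.2 h1) (by linarith : (0 : ℝ) < 5 + 3 * t)]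

lemma seven_div_four_lt_radialCurvature_sin_sq {r : ℝ} (hr : r ∈ Ioo 0 (π / 2)) :
    7 / 4 < radialCurvature (sin r ^ 2) := by
  have hc := (sin_pos_and_cos_pos hr).2
  exact seven_div_four_lt_radialCurvature (sq_nonneg _) (by nlinarith [sin_sq_add_cos_sq r])

lemma isGLB_radialCurvature_sin_sq :
    IsGLB ((fun r => radialCurvature (sin r ^ 2)) '' Ioo 0 (π / 2)) (7 / 4) := by
  refine isGLB_of_mem_closure ?_ ?_
  · rintro _ ⟨r, hr, rfl⟩
    exact (seven_div_four_lt_radialCurvature_sin_sq hr).le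
  · have hcont : Continuous fun r => radialCurvature (sin r ^ 2) :=
      .div (by fun_prop) (by fun_prop) fun r => by positivity
    have hend : radialCurvature (sin (π / 2) ^ 2) = 7 / 4 := by
      norm_num [radialCurvature]
    rw [← hend]
    refine hcont.continuousWithinAt.mem_closure_image ?_
    rw [closure_Ioo (by positivity)]
    exact right_mem_Icc.2 (by positivity)

/-- For the warping function `f(r) = (1/2)·sin(2r)/√(cos²r + 4sin²r)` of the orbit
space `X = S⁶/SU(2)`: on `(0, π/2)` one has `-f''/f > 7/4` and `(1 - f'²)/f² ≥ 9`,
and the infimum of `-f''/f` over `(0, π/2)` equals `7/4`. -/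
theorem stmt5 (f : ℝ → ℝ)
    (hf : ∀ r, f r = (1/2) * Real.sin (2*r) /
      Real.sqrt (Real.cos r ^ 2 + 4 * Real.sin r ^ 2)) :
    (∀ r ∈ Set.Ioo 0 (Real.pi/2),
        7/4 < -(deriv (deriv f) r) / f r ∧
        9 ≤ (1 - (deriv f r)^2) / (f r)^2) ∧
    sInf ((fun r => -(deriv (deriv f) r) / f r) '' Set.Ioo 0 (Real.pi/2)) = 7/4 := by
  obtain rfl : f = warp := funext fun r => (hf r).trans (warp_eq r)
  have hratio : ∀ r ∈ Ioo 0 (π / 2),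
      -deriv (deriv warp) r / warp r = radialCurvature (sin r ^ 2) := fun r hr =>
    neg_deriv_deriv_warp_div_warp (sin_pos_and_cos_pos hr).1.ne' (sin_pos_and_cos_pos hr).2.ne'
  refine ⟨fun r hr => ⟨?_, ?_⟩, ?_⟩
  · rw [hratio r hr]
    exact seven_div_four_lt_radialCurvature_sin_sq hr
  · rw [le_div_iff₀ (pow_pos (warp_pos hr) 2)]
    exact nine_mul_warp_sq_le r
  · rw [image_congr hratio]
    have hmid : π / 4 ∈ Ioo 0 (π / 2) := ⟨by positivity, by linarith [pi_pos]⟩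
    exact isGLB_radialCurvature_sin_sq.csInf_eq ⟨_, mem_image_of_mem _ hmid⟩
end

section
/- There exists a unique t₀ in the open interval (0, π/6) such that -2√3 - √3·cos(2t₀) + sin(2t₀) + 4·sin(4t₀) = 0; moreover t₀ = π/3 - (1/2)·arccos(1/4). -/
open Real Set

lemma cos_eq_of_zero_aux {t : ℝ} (ht : t ∈ Set.Ioo 0 (Real.pi/6))
    (hf : -2*Real.sqrt 3 - Real.sqrt 3 * Real.cos (2*t) + Real.sin (2*t)
          + 4 * Real.sin (4*t) = 0) :
    Real.cos (2*t) = (3*Real.sqrt 5 - 1)/8 := by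
  obtain ⟨h0, h6⟩ := ht
  have hpi := Real.pi_pos
  set c := Real.cos (2*t) with hc
  set s := Real.sin (2*t) with hs
  have hsc : s^2 + c^2 = 1 := Real.sin_sq_add_cos_sq _
  have hspos : 0 < s := Real.sin_pos_of_pos_of_lt_pi (by linarith) (by linarith)
  have hchalf : 1/2 < c := by
    have := Real.cos_lt_cos_of_nonneg_of_le_pi (by linarith : (0:ℝ) ≤ 2*t)
      (by linarith : Real.pi/3 ≤ Real.pi) (by linarith : 2*t < Real.pi/3)
    rw [Real.cos_pi_div_three] at this
    linarith
  have h4 : Real.sin (4*t) = 2 * s * c := by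
    rw [show (4:ℝ)*t = 2*(2*t) by ring, Real.sin_two_mul]
  rw [h4] at hf
  have h3 : Real.sqrt 3 ^ 2 = 3 := Real.sq_sqrt (by norm_num)
  have h5 : Real.sqrt 5 ^ 2 = 5 := Real.sq_sqrt (by norm_num)
  have h5pos : 0 < Real.sqrt 5 := Real.sqrt_pos.mpr (by norm_num)
  have h3pos : 0 < Real.sqrt 3 := Real.sqrt_pos.mpr (by norm_num)
  have key : s * (1 + 8*c) = Real.sqrt 3 * (2 + c) := by linarith
  have hsq : s^2 * (1+8*c)^2 = 3 * (2+c)^2 := by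
    have := congrArg (·^2) key
    simp only [mul_pow] at this
    rw [h3] at this
    linarith [this]
  have hs2 : s^2 = 1 - c^2 := by linarith
  rw [hs2] at hsq
  have hfac : (16*c^2 + 4*c - 11) * (4*c^2 - 1) = 0 := by linear_combination -hsq
  have hq : 16*c^2 + 4*c - 11 = 0 := by
    rcases mul_eq_zero.mp hfac with h | h
    · exact h
    · nlinarith
  have hfac2 : (8*c + 1 - 3*Real.sqrt 5) * (8*c + 1 + 3*Real.sqrt 5) = 0 := by
    nlinarith [hq, h5]
  rcases mul_eq_zero.mp hfac2 with h | h
  · linarith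
  · nlinarith

lemma mem_and_zero_aux :
    (Real.pi/3 - (1/2) * Real.arccos (1/4)) ∈ Set.Ioo 0 (Real.pi/6) ∧
    -2*Real.sqrt 3
        - Real.sqrt 3 * Real.cos (2*(Real.pi/3 - (1/2) * Real.arccos (1/4)))
        + Real.sin (2*(Real.pi/3 - (1/2) * Real.arccos (1/4)))
        + 4 * Real.sin (4*(Real.pi/3 - (1/2) * Real.arccos (1/4))) = 0 := by
  have hpi := Real.pi_pos
  set θ := Real.arccos (1/4) with hθ
  have hcosθ : Real.cos θ = 1/4 := Real.cos_arccos (by norm_num) (by norm_num)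
  have hθ0 : 0 ≤ θ := Real.arccos_nonneg _
  have hθpi : θ ≤ Real.pi := Real.arccos_le_pi _
  have hθlt : θ < 2*Real.pi/3 := by
    by_contra h
    push_neg at h
    have h1 : Real.cos θ ≤ Real.cos (2*Real.pi/3) :=
      Real.cos_le_cos_of_nonneg_of_le_pi (by linarith) hθpi h
    rw [show 2*Real.pi/3 = Real.pi - Real.pi/3 by ring, Real.cos_pi_sub,
      Real.cos_pi_div_three] at h1
    rw [hcosθ] at h1; linarith
  have hθgt : Real.pi/3 < θ := by
    by_contra h
    push_neg at h
    have h1 : Real.cos (Real.pi/3) ≤ Real.cos θ :=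
      Real.cos_le_cos_of_nonneg_of_le_pi hθ0 (by linarith) h
    rw [Real.cos_pi_div_three, hcosθ] at h1; linarith
  have hmem : (Real.pi/3 - (1/2) * θ) ∈ Set.Ioo 0 (Real.pi/6) :=
    ⟨by linarith, by linarith⟩
  refine ⟨hmem, ?_⟩
  have hsinθ : Real.sin θ = Real.sqrt 3 * Real.sqrt 5 / 4 := by
    rw [hθ, Real.sin_arccos, show (1-(1/4:ℝ)^2) = 3*5*(1/4)^2 by norm_num,
      Real.sqrt_mul (by norm_num : (0:ℝ) ≤ 3*5), Real.sqrt_sq (by norm_num : (0:ℝ) ≤ 1/4),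
      Real.sqrt_mul (by norm_num : (0:ℝ) ≤ 3)]
    ring
  have h3 : Real.sqrt 3 ^ 2 = 3 := Real.sq_sqrt (by norm_num)
  have h5 : Real.sqrt 5 ^ 2 = 5 := Real.sq_sqrt (by norm_num)
  have harg : 2*(Real.pi/3 - (1/2)*θ) = Real.pi - (Real.pi/3 + θ) := by ring
  have hc2 : Real.cos (2*(Real.pi/3 - (1/2)*θ))
      = -(1/8) + Real.sqrt 3 ^ 2 * Real.sqrt 5 / 8 := by
    rw [harg, Real.cos_pi_sub, Real.cos_add, Real.cos_pi_div_three,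
      Real.sin_pi_div_three, hcosθ, hsinθ]
    ring
  have hs2 : Real.sin (2*(Real.pi/3 - (1/2)*θ))
      = Real.sqrt 3 / 8 + Real.sqrt 3 * Real.sqrt 5 / 8 := by
    rw [harg, Real.sin_pi_sub, Real.sin_add, Real.cos_pi_div_three,
      Real.sin_pi_div_three, hcosθ, hsinθ]
    ring
  have h4 : Real.sin (4*(Real.pi/3 - (1/2)*θ))
      = 2 * Real.sin (2*(Real.pi/3 - (1/2)*θ)) * Real.cos (2*(Real.pi/3 - (1/2)*θ)) := by
    rw [show 4*(Real.pi/3 - (1/2)*θ) = 2*(2*(Real.pi/3 - (1/2)*θ)) by ring,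
      Real.sin_two_mul]
  rw [h4, hc2, hs2]
  linear_combination (Real.sqrt 3 * Real.sqrt 5^2/8) * h3 + (3*Real.sqrt 3/8) * h5

/-- There is a unique `t₀ ∈ (0, π/6)` with
`-2√3 - √3·cos(2t₀) + sin(2t₀) + 4·sin(4t₀) = 0`; moreover
`t₀ = π/3 - (1/2)·arccos(1/4)`. -/
theorem stmt6 :
    (∃! t₀ : ℝ, t₀ ∈ Set.Ioo 0 (Real.pi/6) ∧
        -2*Real.sqrt 3 - Real.sqrt 3 * Real.cos (2*t₀) + Real.sin (2*t₀)
          + 4 * Real.sin (4*t₀) = 0) ∧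
    (Real.pi/3 - (1/2) * Real.arccos (1/4)) ∈ Set.Ioo 0 (Real.pi/6) ∧
    -2*Real.sqrt 3
        - Real.sqrt 3 * Real.cos (2*(Real.pi/3 - (1/2) * Real.arccos (1/4)))
        + Real.sin (2*(Real.pi/3 - (1/2) * Real.arccos (1/4)))
        + 4 * Real.sin (4*(Real.pi/3 - (1/2) * Real.arccos (1/4))) = 0 := by
  obtain ⟨hmem, hzero⟩ := mem_and_zero_aux
  have hpi := Real.pi_pos
  refine ⟨⟨Real.pi/3 - (1/2) * Real.arccos (1/4), ⟨hmem, hzero⟩, ?_⟩, hmem, hzero⟩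
  rintro t ⟨htmem, htzero⟩
  have h1 := cos_eq_of_zero_aux htmem htzero
  have h2 := cos_eq_of_zero_aux hmem hzero
  have hcc : Real.cos (2*t) = Real.cos (2*(Real.pi/3 - (1/2) * Real.arccos (1/4))) := by
    rw [h1, h2]
  have hinj : 2*t = 2*(Real.pi/3 - (1/2) * Real.arccos (1/4)) :=
    Real.injOn_cos ⟨by linarith [htmem.1], by linarith [htmem.2]⟩
      ⟨by linarith [hmem.1], by linarith [hmem.2]⟩ hcc
  linarith
end

section
/- Define α₁(t) = 27/(5 + 4cos 2t)² and β̃₁(t) = −27(1 − 4cos 2t)/√((5 + 4cos 2t)³(21 − 20cos 2t + 8cos 4t)), and E(t) = (−1 + 2cos 2t)(1 + 2cos 2t)²/(21 − 20cos 2t + 8cos 4t), F(t) = (1 + 2cos 2t)·√((5 + 4cos 2t)(1 + 2cos 4t)²csc²(2t)/(21 − 20cos 2t + 8cos 4t))·sin(2t)/(5 + 4cos 2t). Then for all t ∈ (0, π/6): α₁(t)E(t) − β̃₁(t)F(t) = −54(1 + 2cos 4t)²/((5 + 4cos 2t)²(21 − 20cos 2t + 8cos 4t)) ≤ 0. -/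
open Real Set

/-- The key sign computation for the curvature of `S⁷/U(2)`: with
`α₁(t) = 27/(5 + 4cos 2t)²`,
`β̃₁(t) = −27(1 − 4cos 2t)/√((5 + 4cos 2t)³(21 − 20cos 2t + 8cos 4t))`,
`E(t) = (−1 + 2cos 2t)(1 + 2cos 2t)²/(21 − 20cos 2t + 8cos 4t)` and
`F(t) = (1 + 2cos 2t)·√((5 + 4cos 2t)(1 + 2cos 4t)²csc²(2t)/(21 − 20cos 2t + 8cos 4t))·sin(2t)/(5 + 4cos 2t)`,
one has, for all `t ∈ (0, π/6)`,
`α₁(t)E(t) − β̃₁(t)F(t) = −54(1 + 2cos 4t)²/((5 + 4cos 2t)²(21 − 20cos 2t + 8cos 4t)) ≤ 0`. -/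
theorem stmt10
    (α₁ β₁' E F : ℝ → ℝ)
    (hα : ∀ t, α₁ t = 27 / (5 + 4 * Real.cos (2*t))^2)
    (hβ : ∀ t, β₁' t = -27 * (1 - 4 * Real.cos (2*t)) /
      Real.sqrt ((5 + 4 * Real.cos (2*t))^3
        * (21 - 20 * Real.cos (2*t) + 8 * Real.cos (4*t))))
    (hE : ∀ t, E t = (-1 + 2 * Real.cos (2*t)) * (1 + 2 * Real.cos (2*t))^2 /
      (21 - 20 * Real.cos (2*t) + 8 * Real.cos (4*t)))
    (hF : ∀ t, F t = (1 + 2 * Real.cos (2*t)) *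
      Real.sqrt ((5 + 4 * Real.cos (2*t)) * (1 + 2 * Real.cos (4*t))^2
          * (Real.sin (2*t))⁻¹^2 /
        (21 - 20 * Real.cos (2*t) + 8 * Real.cos (4*t)))
      * Real.sin (2*t) / (5 + 4 * Real.cos (2*t))) :
    ∀ t ∈ Set.Ioo 0 (Real.pi/6),
      α₁ t * E t - β₁' t * F t
          = -54 * (1 + 2 * Real.cos (4*t))^2 /
            ((5 + 4 * Real.cos (2*t))^2
              * (21 - 20 * Real.cos (2*t) + 8 * Real.cos (4*t))) ∧
      -54 * (1 + 2 * Real.cos (4*t))^2 /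
          ((5 + 4 * Real.cos (2*t))^2
            * (21 - 20 * Real.cos (2*t) + 8 * Real.cos (4*t))) ≤ 0 := by
  intro t ht
  obtain ⟨ht0, ht6⟩ := ht
  have hπ := Real.pi_pos
  have h2t0 : 0 < 2*t := by linarith
  have h2tlt : 2*t < Real.pi/3 := by linarith
  have hs : 0 < Real.sin (2*t) :=
    Real.sin_pos_of_pos_of_lt_pi h2t0 (by linarith)
  have hcc : Real.cos (Real.pi/3) < Real.cos (2*t) :=
    Real.cos_lt_cos_of_nonneg_of_le_pi (le_of_lt h2t0) (by linarith) h2tlt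
  rw [Real.cos_pi_div_three] at hcc
  set c := Real.cos (2*t) with hcdef
  have h4 : Real.cos (4*t) = 2*c^2 - 1 := by
    rw [show (4:ℝ)*t = 2*(2*t) by ring, Real.cos_two_mul]
  have hA : (0:ℝ) < 5 + 4*c := by linarith
  have hD : (0:ℝ) < 21 - 20*c + 8*(2*c^2-1) := by nlinarith
  set s := Real.sin (2*t) with hsdef
  set A : ℝ := 5 + 4*c with hAdef
  set D : ℝ := 21 - 20*c + 8*(2*c^2-1) with hDdef
  set R : ℝ := Real.sqrt (A*D) with hRdef
  have hR2 : R^2 = A*D := Real.sq_sqrt (by positivity)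
  have hRpos : 0 < R := Real.sqrt_pos.mpr (by positivity)
  have hx : (0:ℝ) < 4*c^2 - 1 := by nlinarith
  have sqrt1 : Real.sqrt (A^3*D) = A*R := by
    rw [show A^3*D = A^2*(A*D) by ring, Real.sqrt_mul (sq_nonneg A),
      Real.sqrt_sq hA.le]
  have sqrt2 : Real.sqrt (A * (1+2*(2*c^2-1))^2 * s⁻¹^2 / D)
      = R*(4*c^2-1)/(s*D) := by
    rw [show A * (1+2*(2*c^2-1))^2 * s⁻¹^2 / D = (R*(4*c^2-1)/(s*D))^2 by
      rw [div_pow, mul_pow, hR2]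
      field_simp
      ring]
    exact Real.sqrt_sq (by positivity)
  have key : α₁ t * E t - β₁' t * F t
      = -54 * (1 + 2 * Real.cos (4*t))^2 / (A^2 * D) := by
    rw [hα, hβ, hE, hF, h4]
    rw [show (5 + 4*c)^3 * (21 - 20*c + 8*(2*c^2-1)) = A^3*D by rw [hAdef, hDdef],
      show (5 + 4*c) * (1+2*(2*c^2-1))^2 * s⁻¹^2 / (21 - 20*c + 8*(2*c^2-1))
        = A * (1+2*(2*c^2-1))^2 * s⁻¹^2 / D by rw [hAdef, hDdef],
      sqrt1, sqrt2]
    rw [show (21:ℝ) - 20*c + 8*(2*c^2-1) = D by rw [hDdef],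
      show (5:ℝ) + 4*c = A by rw [hAdef]]
    field_simp
    ring
  refine ⟨by rw [key, h4, hAdef, hDdef], ?_⟩
  rw [h4, ← hDdef]
  apply div_nonpos_of_nonpos_of_nonneg
  · nlinarith [sq_nonneg (1+2*(2*c^2-1))]
  · positivity
end

section
/- Let c₃(t) = 1 − 27(−2√3 − √3 cos 2t + sin 2t + 4 sin 4t)² / ((5 + 4cos 2t)(5 − 2cos 2t + 2√3 sin 2t)(−10 + 2cos 2t − 5cos 4t + 4cos 6t + 2√3 sin 2t + 5√3 sin 4t)). Then c₃(t₀) = 1 for t₀ = π/3 − (1/2)arccos(1/4), and t₀ ∈ (0, π/6). -/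
open Real Set

/-- The sectional curvature `c₃` of the plane spanned by the horizontal projections
of `i_R`, `j_R` along the horizontal geodesic in `X = S⁷/SU(2)` equals `1` at
`t₀ = π/3 − (1/2)arccos(1/4)`, and `t₀ ∈ (0, π/6)`. -/
theorem stmt12
    (c₃ : ℝ → ℝ)
    (hc : ∀ t, c₃ t = 1 -
      27 * (-2*Real.sqrt 3 - Real.sqrt 3 * Real.cos (2*t) + Real.sin (2*t)
          + 4 * Real.sin (4*t))^2 /
        ((5 + 4 * Real.cos (2*t))
          * (5 - 2 * Real.cos (2*t) + 2 * Real.sqrt 3 * Real.sin (2*t))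
          * (-10 + 2 * Real.cos (2*t) - 5 * Real.cos (4*t) + 4 * Real.cos (6*t)
              + 2 * Real.sqrt 3 * Real.sin (2*t)
              + 5 * Real.sqrt 3 * Real.sin (4*t)))) :
    c₃ (Real.pi/3 - (1/2) * Real.arccos (1/4)) = 1 ∧
    (Real.pi/3 - (1/2) * Real.arccos (1/4)) ∈ Set.Ioo 0 (Real.pi/6) := by
  have hcos : Real.cos (Real.arccos (1/4)) = 1/4 :=
    Real.cos_arccos (by norm_num) (by norm_num)
  have hsin : Real.sin (Real.arccos (1/4)) = Real.sqrt 15 / 4 := by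
    rw [Real.sin_arccos, show (1:ℝ) - (1/4)^2 = (Real.sqrt 15 / 4)^2 by
        rw [div_pow, div_pow, Real.sq_sqrt (by norm_num : (0:ℝ) ≤ 15)]; norm_num,
      Real.sqrt_sq (by positivity)]
  set t := Real.pi/3 - (1/2) * Real.arccos (1/4) with ht
  have hc2 : Real.cos (2*t) = -1/8 + Real.sqrt 3 * Real.sqrt 15 / 8 := by
    rw [show 2*t = (Real.pi - Real.pi/3) - Real.arccos (1/4) by rw [ht]; ring,
      Real.cos_sub, Real.cos_pi_sub, Real.sin_pi_sub, Real.cos_pi_div_three,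
      Real.sin_pi_div_three, hcos, hsin]
    ring
  have hs2 : Real.sin (2*t) = Real.sqrt 3 / 8 + Real.sqrt 15 / 8 := by
    rw [show 2*t = (Real.pi - Real.pi/3) - Real.arccos (1/4) by rw [ht]; ring,
      Real.sin_sub, Real.cos_pi_sub, Real.sin_pi_sub, Real.cos_pi_div_three,
      Real.sin_pi_div_three, hcos, hsin]
    ring
  have hs4 : Real.sin (4*t) = 2 * Real.sin (2*t) * Real.cos (2*t) := by
    rw [show 4*t = 2*(2*t) by ring, Real.sin_two_mul]
  have h15 : Real.sqrt 15 ^ 2 = 15 := Real.sq_sqrt (by norm_num)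
  have hE : -2*Real.sqrt 3 - Real.sqrt 3 * Real.cos (2*t) + Real.sin (2*t)
      + 4 * Real.sin (4*t) = 0 := by
    rw [hs4, hc2, hs2]
    linear_combination (Real.sqrt 3 / 8) * h15
  constructor
  · rw [hc, hE]
    norm_num
  · have hπ : (0:ℝ) < Real.pi := Real.pi_pos
    have h1 : Real.arccos (1/4) < Real.pi/2 := by
      rw [Real.arccos_lt_pi_div_two]; norm_num
    have h2 : Real.pi/3 < Real.arccos (1/4) := by
      have ha : Real.arccos (1/2) = Real.pi/3 := by
        rw [show (1:ℝ)/2 = Real.cos (Real.pi/3) by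
          rw [Real.cos_pi_div_three], Real.arccos_cos (by positivity) (by linarith)]
      have := Real.strictAntiOn_arccos (by constructor <;> norm_num : (1/4:ℝ) ∈ Set.Icc (-1:ℝ) 1)
        (by constructor <;> norm_num : (1/2:ℝ) ∈ Set.Icc (-1:ℝ) 1) (by norm_num)
      linarith [ha ▸ this]
    constructor
    · rw [ht]; linarith
    · rw [ht]; linarith
end

section
/- There exist complex numbers α, β with |α|² + |β|² = 1, |α|² = (1/2)(1 + 1/√5), such that the element g = [[α, −β̄],[β, ᾱ]] ∈ SU(2), acting on Sym⁶(ℂ²) restricted to the real form of (SO(3), ℝ⁷), maps p = i·e₁³e₂³ to a point q ≠ ±p that is orthogonal to the tangent space span_ℝ{e₁⁴e₂² + e₁²e₂⁴, i(e₁⁴e₂² − e₁²e₂⁴)} of the orbit through p. -/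
open MvPolynomial Complex

/-- We model `Sym⁶(ℂ²)` as the homogeneous sextic polynomials in
`ℂ[e₁, e₂] = MvPolynomial (Fin 2) ℂ`; the monomial `e₁^{6-k}e₂^k` has exponent
vector `expVec k`. -/
noncomputable def expVec (k : ℕ) : (Fin 2) →₀ ℕ :=
  Finsupp.single 0 (6 - k) + Finsupp.single 1 k

/-- The `SU(2)`-invariant Hermitian inner product on sextics, in which the
monomials `e₁^{6-k}e₂^k` are mutually orthogonal with squared norms
`(6-k)!·k!` (up to overall normalization). -/
noncomputable def hinner6 (P Q : MvPolynomial (Fin 2) ℂ) : ℂ :=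
  ∑ k : Fin 7, (((6 - (k : ℕ)).factorial * (k : ℕ).factorial : ℕ) : ℂ)
    * P.coeff (expVec k) * (starRingEnd ℂ) (Q.coeff (expVec k))

/-- The action of `g = [[α, −β̄],[β, ᾱ]] ∈ SU(2)` on sextics, by substituting
`e₁ ↦ αe₁ + βe₂`, `e₂ ↦ −β̄e₁ + ᾱe₂`. -/
noncomputable def su2Act (α β : ℂ) : MvPolynomial (Fin 2) ℂ → MvPolynomial (Fin 2) ℂ :=
  MvPolynomial.bind₁ (fun i : Fin 2 =>
    if i = 0 then C α * X 0 + C β * X 1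
    else C (-(starRingEnd ℂ) β) * X 0 + C ((starRingEnd ℂ) α) * X 1)

lemma coeff_aux (c : ℂ) (m n k : ℕ) :
    coeff (expVec k) (C c * (X (0 : Fin 2) ^ m * X 1 ^ n)) =
      if m = 6 - k ∧ n = k then c else 0 := by
  rw [coeff_C_mul, X_pow_eq_monomial, X_pow_eq_monomial, monomial_mul, one_mul, coeff_monomial]
  unfold expVec
  by_cases h : m = 6 - k ∧ n = k
  · obtain ⟨h1, h2⟩ := h; subst h1; subst h2; simp
  · rw [if_neg, if_neg h, mul_zero]
    intro heq
    refine h ⟨?_, ?_⟩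
    · have := DFunLike.congr_fun heq 0
      simpa [Finsupp.single_apply] using this
    · have := DFunLike.congr_fun heq 1
      simpa [Finsupp.single_apply] using this

lemma expand_aux (A B : ℂ) :
    C Complex.I * ((C A * X (0:Fin 2) + C B * X 1) ^ 3 *
      (C (-B) * X 0 + C A * X 1) ^ 3) =
    C (Complex.I * (-(A^3*B^3))) * (X 0 ^ 6 * X 1 ^ 0)
    + C (Complex.I * (3*A^4*B^2 - 3*A^2*B^4)) * (X 0 ^ 5 * X 1 ^ 1)
    + C (Complex.I * (-3*A^5*B + 9*A^3*B^3 - 3*A*B^5)) * (X 0 ^ 4 * X 1 ^ 2)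
    + C (Complex.I * (A^6 - 9*A^4*B^2 + 9*A^2*B^4 - B^6)) * (X 0 ^ 3 * X 1 ^ 3)
    + C (Complex.I * (3*A^5*B - 9*A^3*B^3 + 3*A*B^5)) * (X 0 ^ 2 * X 1 ^ 4)
    + C (Complex.I * (3*A^4*B^2 - 3*A^2*B^4)) * (X 0 ^ 1 * X 1 ^ 5)
    + C (Complex.I * (A^3*B^3)) * (X 0 ^ 0 * X 1 ^ 6) := by
  simp only [map_mul, map_add, map_sub, map_neg, map_pow, map_ofNat]
  ring

/-- There exist `α, β ∈ ℂ` with `|α|² + |β|² = 1` and `|α|² = (1/2)(1 + 1/√5)`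
such that the corresponding `g ∈ SU(2)` maps `p = i·e₁³e₂³` to a point
`q ≠ ±p` orthogonal (for the real inner product `Re hinner6`) to the tangent
space `span_ℝ{e₁⁴e₂² + e₁²e₂⁴, i(e₁⁴e₂² − e₁²e₂⁴)}` of the singular orbit of
`(SO(3), ℝ⁷)` through `p`. -/
theorem stmt13 :
    ∃ α β : ℂ,
      Complex.normSq α + Complex.normSq β = 1 ∧
      Complex.normSq α = (1/2) * (1 + 1/Real.sqrt 5) ∧
      (let p : MvPolynomial (Fin 2) ℂ := C Complex.I * X 0 ^ 3 * X 1 ^ 3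
       let q := su2Act α β p
       let v : MvPolynomial (Fin 2) ℂ := X 0 ^ 4 * X 1 ^ 2 + X 0 ^ 2 * X 1 ^ 4
       q ≠ p ∧ q ≠ -p ∧
       (hinner6 q v).re = 0 ∧
       (hinner6 q (C Complex.I * (X 0 ^ 4 * X 1 ^ 2 - X 0 ^ 2 * X 1 ^ 4))).re = 0) := by
  have h5 : (0:ℝ) < Real.sqrt 5 := Real.sqrt_pos.2 (by norm_num)
  have h5' : (Real.sqrt 5)^2 = 5 := Real.sq_sqrt (by norm_num)
  have hs1 : 1 / Real.sqrt 5 ≤ 1 := by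
    rw [div_le_one h5]
    nlinarith
  set s : ℝ := 1 / Real.sqrt 5 with hs
  have hs0 : 0 ≤ s := by positivity
  have hss : s ^ 2 = 1/5 := by
    rw [hs, div_pow, h5']; norm_num
  set a : ℝ := Real.sqrt ((1 + s)/2) with ha
  set b : ℝ := Real.sqrt ((1 - s)/2) with hb
  have ha2 : a ^ 2 = (1 + s)/2 := Real.sq_sqrt (by linarith)
  have hb2 : b ^ 2 = (1 - s)/2 := Real.sq_sqrt (by linarith)
  have hapos : 0 < a := Real.sqrt_pos.2 (by linarith)
  have hbpos : 0 < b := Real.sqrt_pos.2 (by nlinarith)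
  refine ⟨(a:ℂ), (b:ℂ), ?_, ?_, ?_⟩
  · simp only [Complex.normSq_ofReal]
    linear_combination ha2 + hb2
  · simp only [Complex.normSq_ofReal]
    linear_combination ha2
  intro p q v
  -- compute q
  have hq : q = C (Complex.I * (-((a:ℂ)^3*(b:ℂ)^3))) * (X 0 ^ 6 * X 1 ^ 0)
    + C (Complex.I * (3*(a:ℂ)^4*(b:ℂ)^2 - 3*(a:ℂ)^2*(b:ℂ)^4)) * (X 0 ^ 5 * X 1 ^ 1)
    + C (Complex.I * (-3*(a:ℂ)^5*(b:ℂ) + 9*(a:ℂ)^3*(b:ℂ)^3 - 3*(a:ℂ)*(b:ℂ)^5)) * (X 0 ^ 4 * X 1 ^ 2)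
    + C (Complex.I * ((a:ℂ)^6 - 9*(a:ℂ)^4*(b:ℂ)^2 + 9*(a:ℂ)^2*(b:ℂ)^4 - (b:ℂ)^6)) * (X 0 ^ 3 * X 1 ^ 3)
    + C (Complex.I * (3*(a:ℂ)^5*(b:ℂ) - 9*(a:ℂ)^3*(b:ℂ)^3 + 3*(a:ℂ)*(b:ℂ)^5)) * (X 0 ^ 2 * X 1 ^ 4)
    + C (Complex.I * (3*(a:ℂ)^4*(b:ℂ)^2 - 3*(a:ℂ)^2*(b:ℂ)^4)) * (X 0 ^ 1 * X 1 ^ 5)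
    + C (Complex.I * ((a:ℂ)^3*(b:ℂ)^3)) * (X 0 ^ 0 * X 1 ^ 6) := by
    show su2Act _ _ p = _
    rw [← expand_aux]
    simp only [su2Act, p, map_mul, map_pow, bind₁_X_right, bind₁_C_right]
    simp only [Complex.conj_ofReal]
    norm_num
    ring
  -- coefficients of q
  have hcoeff : ∀ k : ℕ, k ≤ 6 → coeff (expVec k) q =
      if k = 0 then Complex.I * (-((a:ℂ)^3*(b:ℂ)^3))
      else if k = 1 then Complex.I * (3*(a:ℂ)^4*(b:ℂ)^2 - 3*(a:ℂ)^2*(b:ℂ)^4)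
      else if k = 2 then Complex.I * (-3*(a:ℂ)^5*(b:ℂ) + 9*(a:ℂ)^3*(b:ℂ)^3 - 3*(a:ℂ)*(b:ℂ)^5)
      else if k = 3 then Complex.I * ((a:ℂ)^6 - 9*(a:ℂ)^4*(b:ℂ)^2 + 9*(a:ℂ)^2*(b:ℂ)^4 - (b:ℂ)^6)
      else if k = 4 then Complex.I * (3*(a:ℂ)^5*(b:ℂ) - 9*(a:ℂ)^3*(b:ℂ)^3 + 3*(a:ℂ)*(b:ℂ)^5)
      else if k = 5 then Complex.I * (3*(a:ℂ)^4*(b:ℂ)^2 - 3*(a:ℂ)^2*(b:ℂ)^4)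
      else if k = 6 then Complex.I * ((a:ℂ)^3*(b:ℂ)^3)
      else 0 := by
    intro k hk
    rw [hq]
    simp only [coeff_add, coeff_aux]
    interval_cases k <;> norm_num
  -- key vanishing: the k=2 and k=4 coefficients are 0
  have hab2 : (a:ℂ)^2 * (b:ℂ)^2 = 1/5 := by
    have : a^2 * b^2 = 1/5 := by linear_combination b^2*ha2 + ((1+s)/2)*hb2 - (1/4)*hss
    calc (a:ℂ)^2 * (b:ℂ)^2 = ((a^2 * b^2 : ℝ) : ℂ) := by push_cast; ring
    _ = 1/5 := by rw [this]; norm_num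
  have hab : (a:ℂ)^4 + (b:ℂ)^4 = 3/5 := by
    have : a^4 + b^4 = 3/5 := by linear_combination (a^2 + (1+s)/2)*ha2 + (b^2 + (1-s)/2)*hb2 + (1/2)*hss
    calc (a:ℂ)^4 + (b:ℂ)^4 = ((a^4 + b^4 : ℝ) : ℂ) := by push_cast; ring
    _ = 3/5 := by rw [this]; norm_num
  have hr2 : -3*(a:ℂ)^5*(b:ℂ) + 9*(a:ℂ)^3*(b:ℂ)^3 - 3*(a:ℂ)*(b:ℂ)^5 = 0 := by
    have : -3*(a:ℂ)^5*(b:ℂ) + 9*(a:ℂ)^3*(b:ℂ)^3 - 3*(a:ℂ)*(b:ℂ)^5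
        = 3*(a:ℂ)*(b:ℂ) * (3*((a:ℂ)^2*(b:ℂ)^2) - ((a:ℂ)^4 + (b:ℂ)^4)) := by ring
    rw [this, hab2, hab]; ring
  have hr4 : 3*(a:ℂ)^5*(b:ℂ) - 9*(a:ℂ)^3*(b:ℂ)^3 + 3*(a:ℂ)*(b:ℂ)^5 = 0 := by
    linear_combination -hr2
  have hc2 : coeff (expVec 2) q = 0 := by
    rw [hcoeff 2 (by norm_num)]
    norm_num
    linear_combination hr2
  have hc4 : coeff (expVec 4) q = 0 := by
    rw [hcoeff 4 (by norm_num)]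
    norm_num
    linear_combination hr4
  have hp0 : coeff (expVec 0) p = 0 := by
    have hrw : p = C Complex.I * (X (0:Fin 2) ^ 3 * X 1 ^ 3) := mul_assoc _ _ _
    rw [hrw, coeff_aux]; norm_num
  have habne : (a:ℂ)^3*(b:ℂ)^3 ≠ 0 := by
    intro h1
    have h2 : a^3*b^3 = 0 := by exact_mod_cast h1
    nlinarith [pow_pos hapos 3, pow_pos hbpos 3]
  have e3 : ((3 : Fin 7) : ℕ) = 3 := rfl
  have e4 : ((4 : Fin 7) : ℕ) = 4 := rfl
  have e5 : ((5 : Fin 7) : ℕ) = 5 := rfl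
  have e6 : ((6 : Fin 7) : ℕ) = 6 := rfl
  refine ⟨?_, ?_, ?_, ?_⟩
  · -- q ≠ p
    intro h
    have h0 := congrArg (coeff (expVec 0)) h
    rw [hcoeff 0 (by norm_num), hp0, if_pos rfl] at h0
    have h1 : Complex.I = 0 ∨ -((a:ℂ)^3*(b:ℂ)^3) = 0 := mul_eq_zero.1 h0
    rcases h1 with h1 | h1
    · exact Complex.I_ne_zero h1
    · exact habne (neg_eq_zero.1 h1)
  · -- q ≠ -p
    intro h
    have h0 := congrArg (coeff (expVec 0)) h
    rw [hcoeff 0 (by norm_num), coeff_neg, hp0, neg_zero, if_pos rfl] at h0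
    have h1 : Complex.I = 0 ∨ -((a:ℂ)^3*(b:ℂ)^3) = 0 := mul_eq_zero.1 h0
    rcases h1 with h1 | h1
    · exact Complex.I_ne_zero h1
    · exact habne (neg_eq_zero.1 h1)
  · -- first inner product
    have hv : ∀ k : ℕ, k ≤ 6 → coeff (expVec k) v = if k = 2 then 1 else if k = 4 then 1 else 0 := by
      intro k hk
      have : v = C (1:ℂ) * (X (0:Fin 2) ^ 4 * X 1 ^ 2) + C (1:ℂ) * (X 0 ^ 2 * X 1 ^ 4) := by
        simp [v]
      rw [this, coeff_add, coeff_aux, coeff_aux]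
      interval_cases k <;> norm_num
    rw [hinner6, Fin.sum_univ_seven]
    simp only [Fin.val_zero, Fin.val_one, Fin.val_two, e3, e4, e5, e6]
    rw [hc2, hc4, hv 0 (by norm_num), hv 1 (by norm_num), hv 3 (by norm_num),
      hv 5 (by norm_num), hv 6 (by norm_num)]
    norm_num
  · -- second inner product
    rw [hinner6, Fin.sum_univ_seven]
    simp only [Fin.val_zero, Fin.val_one, Fin.val_two, e3, e4, e5, e6]
    have hw : ∀ k : ℕ, k ≤ 6 → k ≠ 2 → k ≠ 4 →
        coeff (expVec k) (C Complex.I * (X (0:Fin 2) ^ 4 * X 1 ^ 2 - X 0 ^ 2 * X 1 ^ 4)) = 0 := by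
      intro k hk hk2 hk4
      have : C Complex.I * (X (0:Fin 2) ^ 4 * X 1 ^ 2 - X 0 ^ 2 * X 1 ^ 4)
          = C Complex.I * (X (0:Fin 2) ^ 4 * X 1 ^ 2) + C (-Complex.I) * (X 0 ^ 2 * X 1 ^ 4) := by
        rw [map_neg]; ring
      rw [this, coeff_add, coeff_aux, coeff_aux]
      interval_cases k <;> first | omega | norm_num
    rw [hc2, hc4, hw 0 (by norm_num) (by norm_num) (by norm_num),
      hw 1 (by norm_num) (by norm_num) (by norm_num),
      hw 3 (by norm_num) (by norm_num) (by norm_num),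
      hw 5 (by norm_num) (by norm_num) (by norm_num),
      hw 6 (by norm_num) (by norm_num) (by norm_num)]
    norm_num
end
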